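/- arXiv:2602.22648 — 6 statements merged into one kernel-verified Lean document; each statement's English description precedes it below -/
import Mathlib

section
/- Let E be a real inner product space and let u, v ∈ E with v ≠ 0. Then |‖u‖ − ‖v‖ − ⟨u − v, v⟩/‖v‖| ≤ 2‖u − v‖²/(‖u‖ + ‖v‖); in particular this quantity is at most 2‖u − v‖²/‖v‖. (This is the second-order expansion of the norm used in the proof of the drift-condition theorem: the first-order approximation of ‖u‖ − ‖v‖ by the inner product of the increment u − v with the unit vector v/‖v‖ has error controlled by the squared norm of the increment.) -/
open scoped RealInnerProductSpace

/-- Second-order expansion of the norm: the first-order approximation of `‖u‖ − ‖v‖`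
by the inner product of the increment `u − v` with the unit vector `v/‖v‖` has error
controlled by the squared norm of the increment. -/
theorem stmt0 {E : Type*} [NormedAddCommGroup E] [InnerProductSpace ℝ E]
    (u v : E) (hv : v ≠ 0) :
    abs (‖u‖ - ‖v‖ - ⟪u - v, v⟫ / ‖v‖) ≤ 2 * ‖u - v‖ ^ 2 / (‖u‖ + ‖v‖) ∧
    2 * ‖u - v‖ ^ 2 / (‖u‖ + ‖v‖) ≤ 2 * ‖u - v‖ ^ 2 / ‖v‖ := by
  have hb : (0:ℝ) < ‖v‖ := norm_pos_iff.mpr hv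
  have ha : (0:ℝ) ≤ ‖u‖ := norm_nonneg u
  have hn : (0:ℝ) ≤ ‖u - v‖ := norm_nonneg _
  have hs : (0:ℝ) < ‖u‖ + ‖v‖ := by linarith
  have hid : ‖u‖ ^ 2 = ‖v‖ ^ 2 + 2 * ⟪u - v, v⟫ + ‖u - v‖ ^ 2 := by
    have h1 : ‖u - v‖ ^ 2 = ‖u‖ ^ 2 - 2 * ⟪u, v⟫ + ‖v‖ ^ 2 := norm_sub_sq_real u v
    have h2 : ⟪u - v, v⟫ = ⟪u, v⟫ - ‖v‖ ^ 2 := by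
      rw [inner_sub_left, real_inner_self_eq_norm_sq]
    linarith
  have hcs : |⟪u - v, v⟫| ≤ ‖u - v‖ * ‖v‖ := abs_real_inner_le_norm _ _
  have hab : |‖u‖ - ‖v‖| ≤ ‖u - v‖ := abs_norm_sub_norm_le u v
  obtain ⟨hcs1, hcs2⟩ := abs_le.mp hcs
  obtain ⟨hab1, hab2⟩ := abs_le.mp hab
  have haux : ‖u‖ - ‖v‖ = (2 * ⟪u - v, v⟫ + ‖u - v‖ ^ 2) / (‖u‖ + ‖v‖) := by
    rw [eq_div_iff hs.ne']
    ring_nf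
    nlinarith [hid]
  constructor
  · rw [abs_le]
    constructor
    · rw [neg_le, ← sub_nonneg, sub_neg_eq_add, add_comm]
      have key : ‖u‖ - ‖v‖ - ⟪u - v, v⟫ / ‖v‖ + 2 * ‖u - v‖ ^ 2 / (‖u‖ + ‖v‖)
          = (‖u - v‖ ^ 2 * ‖v‖ + (⟪u - v, v⟫ * (‖v‖ - ‖u‖)) + 2 * ‖u - v‖ ^ 2 * ‖v‖)
            / ((‖u‖ + ‖v‖) * ‖v‖) := by
        rw [haux]; field_simp; ring
      rw [key]
      apply div_nonneg _ (by positivity)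
      nlinarith [mul_nonneg (sub_nonneg.mpr hcs2) (sub_nonneg.mpr (by linarith : ‖v‖ - ‖u‖ ≤ ‖u - v‖)),
        mul_nonneg (sub_nonneg.mpr (by linarith : -(‖u - v‖ * ‖v‖) ≤ ⟪u - v, v⟫))
          (sub_nonneg.mpr (by linarith : -‖u - v‖ ≤ ‖v‖ - ‖u‖))]
    · rw [← sub_nonneg]
      have key : 2 * ‖u - v‖ ^ 2 / (‖u‖ + ‖v‖) - (‖u‖ - ‖v‖ - ⟪u - v, v⟫ / ‖v‖)
          = (‖u - v‖ ^ 2 * ‖v‖ - (⟪u - v, v⟫ * (‖v‖ - ‖u‖)))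
            / ((‖u‖ + ‖v‖) * ‖v‖) := by
        rw [haux]; field_simp; ring
      rw [key]
      apply div_nonneg _ (by positivity)
      nlinarith [mul_nonneg (sub_nonneg.mpr hcs2) (sub_nonneg.mpr (by linarith : ‖v‖ - ‖u‖ ≤ ‖u - v‖)),
        mul_nonneg (sub_nonneg.mpr (by linarith : -(‖u - v‖ * ‖v‖) ≤ ⟪u - v, v⟫))
          (sub_nonneg.mpr (by linarith : -‖u - v‖ ≤ ‖v‖ - ‖u‖))]
  · gcongr
    linarith
end

section
/- Fix ρ ∈ (0,1), λ > 0, C ≥ 1 and M, Δ > 0. There exist constants β ∈ (0,1), b > 0 and λ₁ > 0, depending only on M, Δ, λ and C, such that the following holds: for every Borel probability measure Γ on ℝ^d with ∫ exp(λ‖X‖) dΓ(X) ≤ C and every measurable allocation function g: ℝ^d × ℝ^d → [0,1] satisfying the (M,Δ)-negative feedback condition, one has for all Λ ∈ W_Γ: ∫ [ g(Λ,X)·exp(λ₁‖Λ + (1−ρ)X‖) + (1−g(Λ,X))·exp(λ₁‖Λ − ρX‖) ] dΓ(X) ≤ β·exp(λ₁‖Λ‖) + b. Moreover, writing V(Λ)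 = exp(λ₁‖Λ‖), for every α ∈ (0,1] there exists β_α ∈ (0,1) (which can be chosen continuous in α with β_α → 1 as α → 0) such that ∫ [ g(Λ,X)·V^α(Λ + (1−ρ)X) + (1−g(Λ,X))·V^α(Λ − ρX) ] dΓ(X) ≤ β_α·V^α(Λ) + b for all Λ ∈ W_Γ. -/
open MeasureTheory ProbabilityTheory Filter Set
open scoped ENNReal RealInnerProductSpace

noncomputable section

/-- `ℝ^d` with the Euclidean norm. -/
abbrev Ed (d : ℕ) : Type := EuclideanSpace ℝ (Fin d)

/-- Action of the CAR transition kernel `P_g` on a function `h`: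
`(P_g h)(Λ) = ∫ [ g(Λ,X)·h(Λ + (1−ρ)X) + (1−g(Λ,X))·h(Λ − ρX) ] dΓ(X)`. -/
def kernelOp (d : ℕ) (ρ : ℝ) (Γ : Measure (Ed d)) (g : Ed d → Ed d → ℝ)
    (h : Ed d → ℝ) (Λ : Ed d) : ℝ :=
  ∫ X, g Λ X * h (Λ + (1 - ρ) • X) + (1 - g Λ X) * h (Λ - ρ • X) ∂Γ

/-- `W_Γ`: the linear span of the topological support of `Γ` (the set of points all of
whose open neighbourhoods have positive measure). -/
def suppSpan (d : ℕ) (Γ : Measure (Ed d)) : Submodule ℝ (Ed d) :=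
  Submodule.span ℝ {x : Ed d | ∀ U : Set (Ed d), IsOpen U → x ∈ U → 0 < Γ U}

/-- The `(M,Δ)`-negative feedback condition for an allocation function `g`. -/
def NegFeedback (d : ℕ) (ρ M Δ : ℝ) (Γ : Measure (Ed d)) (g : Ed d → Ed d → ℝ) : Prop :=
  ∀ Λ : Ed d, Λ ∈ suppSpan d Γ → M ≤ ‖Λ‖ →
    (∫ X, (g Λ X - ρ) * (⟪X, Λ⟫ / ‖Λ‖) ∂Γ) ≤ -Δ

/-- `Γ` is sub-exponential: `∫ exp(λ‖X‖) dΓ(X) < ∞` for some `λ > 0`. -/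
def SubExp (d : ℕ) (Γ : Measure (Ed d)) : Prop :=
  ∃ l : ℝ, 0 < l ∧ Integrable (fun x => Real.exp (l * ‖x‖)) Γ


/-!
For `‖Λ‖` large and `‖X‖ ≤ R`, the second-order expansion
`‖Λ + uX‖ ≤ ‖Λ‖ + u⟪X, Λ⟫/‖Λ‖ + ‖X‖²/(2‖Λ‖)` together with `exp y ≤ 1 + y + y²` turns the integrand
into `exp (t‖Λ‖) (1 + t (g - ρ) ⟪X, Λ⟫/‖Λ‖ + O(t²R² + tR²/‖Λ‖))`, so the negative feedback
condition produces the factor `1 - tΔ/2` after integration. Jumps with `‖X‖ > R` cost at most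
`2C exp (-λR/2)` by the exponential moment, and `R ≍ log (1/t) / λ` makes this and the quadratic
error `O(t log² (1/t))` small fractions of `tΔ` for all small `t`. For bounded `‖Λ‖` the integrand
is at most `exp (t‖Λ‖) exp (λ‖X‖)`, which goes into `b`. Since `V^α = exp (αλ₁‖·‖)`, the bound
for `V^α` is the same bound at the rate `αλ₁`.
-/

open Real

lemma Real.exp_le_one_add_add_sq {x : ℝ} (hx : |x| ≤ 1) : exp x ≤ 1 + x + x ^ 2 := by
  linarith [(abs_le.mp (Real.abs_exp_sub_one_sub_id_le hx)).2]

lemma Real.sq_log_le_sqrt {y : ℝ} (hy : 1 ≤ y) : log y ^ 2 ≤ 16 * √y := by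
  have hlog : log y ≤ y ^ (1 / 4 : ℝ) / (1 / 4) := log_le_rpow_div (by linarith) (by norm_num)
  have hsq : (y ^ (1 / 4 : ℝ)) ^ 2 = √y := by
    rw [sqrt_eq_rpow, ← rpow_natCast, ← rpow_mul (by linarith)]; norm_num
  nlinarith [log_nonneg hy]

lemma combo_exp_le_one_add_add_sq {γ A B : ℝ} (hγ : γ ∈ Icc (0 : ℝ) 1) (hA : |A| ≤ 1)
    (hB : |B| ≤ 1) :
    γ * exp A + (1 - γ) * exp B ≤ 1 + (γ * A + (1 - γ) * B) + (γ * A ^ 2 + (1 - γ) * B ^ 2) := by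
  have h1 : 0 ≤ 1 - γ := by linarith [hγ.2]
  nlinarith [mul_le_mul_of_nonneg_left (exp_le_one_add_add_sq hA) hγ.1,
    mul_le_mul_of_nonneg_left (exp_le_one_add_add_sq hB) h1]

section InnerProductSpace

variable {E : Type*} [NormedAddCommGroup E] [InnerProductSpace ℝ E]

lemma abs_mul_inner_div_norm_le (x Λ : E) {c : ℝ} (hc : |c| ≤ 1) :
    |c * (⟪x, Λ⟫ / ‖Λ‖)| ≤ ‖x‖ := by
  rw [abs_mul]
  refine (mul_le_of_le_one_left (abs_nonneg _) hc).trans ?_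
  rcases eq_or_ne Λ 0 with rfl | hΛ
  · simp
  rw [abs_div, abs_norm, div_le_iff₀ (norm_pos_iff.mpr hΛ)]
  exact abs_real_inner_le_norm x Λ

lemma norm_add_smul_le_norm_add_inner (Λ x : E) {u : ℝ} (hu : |u| ≤ 1) (hΛ : Λ ≠ 0) :
    ‖Λ + u • x‖ ≤ ‖Λ‖ + u * (⟪x, Λ⟫ / ‖Λ‖) + ‖x‖ ^ 2 / (2 * ‖Λ‖) := by
  have hn : 0 < ‖Λ‖ := norm_pos_iff.mpr hΛ
  set s := ⟪x, Λ⟫ / ‖Λ‖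
  have hs : ⟪x, Λ⟫ = s * ‖Λ‖ := (div_mul_cancel₀ _ hn.ne').symm
  have hus := abs_mul_inner_div_norm_le x Λ hu
  have hsq : ‖Λ + u • x‖ ^ 2 = ‖Λ‖ ^ 2 + 2 * u * (s * ‖Λ‖) + u ^ 2 * ‖x‖ ^ 2 := by
    rw [norm_add_sq_real, real_inner_smul_right, real_inner_comm, hs, norm_smul, norm_eq_abs,
      mul_pow, sq_abs]
    ring
  have hq : ‖x‖ ^ 2 / (2 * ‖Λ‖) * (2 * ‖Λ‖) = ‖x‖ ^ 2 := by field_simp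
  have hu2 : u ^ 2 ≤ 1 := by nlinarith [abs_nonneg u, sq_abs u]
  obtain ⟨hus1, -⟩ := abs_le.mp hus
  have hrhs : 0 ≤ ‖Λ‖ + u * s + ‖x‖ ^ 2 / (2 * ‖Λ‖) := by
    nlinarith [sq_nonneg (‖Λ‖ - ‖x‖)]
  refine le_of_sq_le_sq ?_ hrhs
  rw [hsq]
  nlinarith [sq_nonneg (u * s + ‖x‖ ^ 2 / (2 * ‖Λ‖)), sq_nonneg ‖x‖]

/-- The integrand of `P_g V (Λ)` for `V = exp (t ‖·‖)`, at the allocation value `γ = g Λ x`. -/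
def expMix (ρ t γ : ℝ) (Λ x : E) : ℝ :=
  γ * exp (t * ‖Λ + (1 - ρ) • x‖) + (1 - γ) * exp (t * ‖Λ - ρ • x‖)

variable {ρ t γ : ℝ} {Λ x : E}

lemma expMix_nonneg (hγ : γ ∈ Icc (0 : ℝ) 1) : 0 ≤ expMix ρ t γ Λ x := by
  obtain ⟨hγ₀, hγ₁⟩ := hγ
  have : 0 ≤ 1 - γ := by linarith
  unfold expMix
  positivity

lemma expMix_le_exp_mul_exp (hρ : ρ ∈ Icc (0 : ℝ) 1) (hγ : γ ∈ Icc (0 : ℝ) 1) (ht : 0 ≤ t) :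
    expMix ρ t γ Λ x ≤ exp (t * ‖Λ‖) * exp (t * ‖x‖) := by
  have hstep : ∀ c : ℝ, |c| ≤ 1 → exp (t * ‖Λ + c • x‖) ≤ exp (t * ‖Λ‖) * exp (t * ‖x‖) := by
    intro c hc
    rw [← exp_add, ← mul_add]
    gcongr
    calc ‖Λ + c • x‖ ≤ ‖Λ‖ + |c| * ‖x‖ := by simpa [norm_smul] using norm_add_le Λ (c • x)
      _ ≤ ‖Λ‖ + ‖x‖ := by gcongr; exact mul_le_of_le_one_left (norm_nonneg x) hc
  have h₁ := hstep (1 - ρ) (by rw [abs_le]; constructor <;> linarith [hρ.1, hρ.2])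
  have h₂ := hstep (-ρ) (by rw [abs_neg, abs_le]; constructor <;> linarith [hρ.1, hρ.2])
  rw [neg_smul, ← sub_eq_add_neg] at h₂
  have : 0 ≤ 1 - γ := by linarith [hγ.2]
  unfold expMix
  nlinarith [hγ.1]

lemma expMix_le_of_norm_le {R Δ : ℝ} (hρ : ρ ∈ Icc (0 : ℝ) 1) (hγ : γ ∈ Icc (0 : ℝ) 1)
    (ht : 0 ≤ t) (hΔ : 0 < Δ) (hR : Δ / 4 ≤ R) (htR : t * R ^ 2 ≤ Δ / 18)
    (hΛ : 4 * R ^ 2 ≤ Δ * ‖Λ‖) (hx : ‖x‖ ≤ R) :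
    expMix ρ t γ Λ x ≤ exp (t * ‖Λ‖) * (1 + t * Δ / 4 + t * ((γ - ρ) * (⟪x, Λ⟫ / ‖Λ‖))) := by
  have hR0 : 0 < R := by linarith
  have hn : 0 < ‖Λ‖ := by nlinarith
  set s := ⟪x, Λ⟫ / ‖Λ‖
  set q := ‖x‖ ^ 2 / (2 * ‖Λ‖)
  have hq0 : 0 ≤ q := by positivity
  have hq : q ≤ Δ / 8 := by
    rw [div_le_div_iff₀ (by positivity) (by norm_num)]
    nlinarith [norm_nonneg x]
  have hstep : ∀ u : ℝ, |u| ≤ 1 →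
      |t * (u * s + q)| ≤ t * (3 * R / 2) ∧
      exp (t * ‖Λ + u • x‖) ≤ exp (t * ‖Λ‖) * exp (t * (u * s + q)) := by
    intro u hu
    have hus := (abs_mul_inner_div_norm_le x Λ hu).trans hx
    constructor
    · rw [abs_mul, abs_of_nonneg ht]
      gcongr
      rw [abs_le] at hus ⊢; constructor <;> linarith
    · rw [← exp_add, ← mul_add]
      gcongr
      linarith [norm_add_smul_le_norm_add_inner Λ x hu (norm_pos_iff.mp hn)]
  obtain ⟨hA, h₁⟩ := hstep (1 - ρ) (by rw [abs_le]; constructor <;> linarith [hρ.1, hρ.2])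
  obtain ⟨hB, h₂⟩ := hstep (-ρ) (by rw [abs_neg, abs_le]; constructor <;> linarith [hρ.1, hρ.2])
  rw [neg_smul, ← sub_eq_add_neg] at h₂
  set A := t * ((1 - ρ) * s + q)
  set B := t * (-ρ * s + q)
  have hA2 : A ^ 2 ≤ (t * (3 * R / 2)) ^ 2 := by rw [← sq_abs]; gcongr
  have hB2 : B ^ 2 ≤ (t * (3 * R / 2)) ^ 2 := by rw [← sq_abs]; gcongr
  have hγ' : 0 ≤ 1 - γ := by linarith [hγ.2]
  have hexp := (exp_pos (t * ‖Λ‖)).le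
  calc expMix ρ t γ Λ x ≤ exp (t * ‖Λ‖) * (γ * exp A + (1 - γ) * exp B) := by
        unfold expMix; nlinarith [hγ.1]
    _ ≤ exp (t * ‖Λ‖) * (1 + (γ * A + (1 - γ) * B) + (γ * A ^ 2 + (1 - γ) * B ^ 2)) :=
        mul_le_mul_of_nonneg_left
          (combo_exp_le_one_add_add_sq hγ (by nlinarith) (by nlinarith)) hexp
    _ ≤ exp (t * ‖Λ‖) * (1 + t * Δ / 4 + t * ((γ - ρ) * s)) := by
        refine mul_le_mul_of_nonneg_left ?_ hexp
        nlinarith [mul_le_mul_of_nonneg_left hA2 hγ.1, mul_le_mul_of_nonneg_left hB2 hγ',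
          mul_le_mul_of_nonneg_left hq ht, mul_le_mul_of_nonneg_left htR ht]

lemma expMix_le_linear_add_tail {lam R Δ : ℝ} (hρ : ρ ∈ Icc (0 : ℝ) 1)
    (hγ : γ ∈ Icc (0 : ℝ) 1) (ht : 0 ≤ t) (htlam : t ≤ lam / 2) (hΔ : 0 < Δ) (hR : Δ / 4 ≤ R)
    (htR : t * R ^ 2 ≤ Δ / 18) (hΛ : 4 * R ^ 2 ≤ Δ * ‖Λ‖) :
    expMix ρ t γ Λ x ≤ exp (t * ‖Λ‖) * (1 + t * Δ / 4 + t * ((γ - ρ) * (⟪x, Λ⟫ / ‖Λ‖)) +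
      2 * exp (-(lam * R) / 2) * exp (lam * ‖x‖)) := by
  have htail : 0 ≤ 2 * exp (-(lam * R) / 2) * exp (lam * ‖x‖) := by positivity
  rcases le_or_gt ‖x‖ R with hx | hx
  · calc expMix ρ t γ Λ x
        ≤ exp (t * ‖Λ‖) * (1 + t * Δ / 4 + t * ((γ - ρ) * (⟪x, Λ⟫ / ‖Λ‖))) :=
          expMix_le_of_norm_le hρ hγ ht hΔ hR htR hΛ hx
      _ ≤ _ := mul_le_mul_of_nonneg_left (le_add_of_nonneg_right htail) (exp_pos _).le
  -- for `‖x‖ > R` only the crude bound is available; the tail term absorbs it and the linear term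
  refine (expMix_le_exp_mul_exp hρ hγ ht).trans (mul_le_mul_of_nonneg_left ?_ (exp_pos _).le)
  have hlin := abs_mul_inner_div_norm_le x Λ (c := γ - ρ)
    (by rw [abs_le]; constructor <;> linarith [hρ.1, hρ.2, hγ.1, hγ.2])
  have h₁ := add_one_le_exp (t * ‖x‖)
  have h₂ : exp (t * ‖x‖) ≤ exp (-(lam * R) / 2) * exp (lam * ‖x‖) := by
    rw [← exp_add]; gcongr; nlinarith
  nlinarith [abs_le.mp hlin, mul_nonneg ht hΔ.le]

end InnerProductSpace

section Integration

variable {E : Type*} [NormedAddCommGroup E] [MeasurableSpace E] [OpensMeasurableSpace E]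
  {μ : Measure E} {lam : ℝ}

lemma integrable_norm_of_integrable_exp (hlam : 0 < lam)
    (hint : Integrable (fun x => exp (lam * ‖x‖)) μ) : Integrable (fun x => ‖x‖) μ := by
  refine (hint.div_const lam).mono' continuous_norm.aestronglyMeasurable (ae_of_all _ fun x => ?_)
  rw [norm_norm, le_div_iff₀ hlam]
  linarith [add_one_le_exp (lam * ‖x‖), mul_comm lam ‖x‖]

variable [InnerProductSpace ℝ E] {ρ t : ℝ} {γ : E → ℝ} {Λ : E}

lemma integrable_expMix (hγm : Measurable γ) (hγ : ∀ x, γ x ∈ Icc (0 : ℝ) 1)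
    (hρ : ρ ∈ Icc (0 : ℝ) 1) (ht : 0 ≤ t) (htlam : t ≤ lam)
    (hint : Integrable (fun x => exp (lam * ‖x‖)) μ) :
    Integrable (fun x => expMix ρ t (γ x) Λ x) μ := by
  have h₁ : Continuous fun x : E => exp (t * ‖Λ + (1 - ρ) • x‖) := by fun_prop
  have h₂ : Continuous fun x : E => exp (t * ‖Λ - ρ • x‖) := by fun_prop
  have hm : Measurable fun x => expMix ρ t (γ x) Λ x :=
    (hγm.mul h₁.measurable).add ((measurable_const.sub hγm).mul h₂.measurable)
  refine (hint.const_mul (exp (t * ‖Λ‖))).mono' hm.aestronglyMeasurable (ae_of_all _ fun x => ?_)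
  rw [norm_of_nonneg (expMix_nonneg (hγ x))]
  exact (expMix_le_exp_mul_exp hρ (hγ x) ht).trans (by gcongr)

lemma integral_expMix_le_of_feedback [IsProbabilityMeasure μ] {C R Δ : ℝ}
    (hγm : Measurable γ) (hγ : ∀ x, γ x ∈ Icc (0 : ℝ) 1) (hρ : ρ ∈ Icc (0 : ℝ) 1)
    (ht : 0 < t) (htlam : t ≤ lam / 2) (hΔ : 0 < Δ) (hR : Δ / 4 ≤ R)
    (htR : t * R ^ 2 ≤ Δ / 18) (htail : 2 * C * exp (-(lam * R) / 2) ≤ t * Δ / 4)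
    (hΛ : 4 * R ^ 2 ≤ Δ * ‖Λ‖) (hint : Integrable (fun x => exp (lam * ‖x‖)) μ)
    (hintC : ∫ x, exp (lam * ‖x‖) ∂μ ≤ C)
    (hfeed : ∫ x, (γ x - ρ) * (⟪x, Λ⟫ / ‖Λ‖) ∂μ ≤ -Δ) :
    ∫ x, expMix ρ t (γ x) Λ x ∂μ ≤ (1 - t * Δ / 2) * exp (t * ‖Λ‖) := by
  set drift := fun x => (γ x - ρ) * (⟪x, Λ⟫ / ‖Λ‖)
  set c := 2 * exp (-(lam * R) / 2)
  have hdrift : Integrable drift μ := by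
    refine (integrable_norm_of_integrable_exp (by linarith) hint).mono'
      ((hγm.sub measurable_const).mul ?_).aestronglyMeasurable (ae_of_all _ fun x => ?_)
    · exact ((continuous_id.inner continuous_const).div_const _).measurable
    · exact abs_mul_inner_div_norm_le x Λ
        (by rw [abs_le]; constructor <;> linarith [hρ.1, hρ.2, (hγ x).1, (hγ x).2])
  have hlinear : Integrable (fun x => 1 + t * Δ / 4 + t * drift x) μ :=
    (integrable_const _).add (hdrift.const_mul t)
  have hbound : Integrable (fun x => 1 + t * Δ / 4 + t * drift x + c * exp (lam * ‖x‖)) μ :=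
    hlinear.add (hint.const_mul c)
  calc ∫ x, expMix ρ t (γ x) Λ x ∂μ
      ≤ ∫ x, exp (t * ‖Λ‖) * (1 + t * Δ / 4 + t * drift x + c * exp (lam * ‖x‖)) ∂μ :=
        integral_mono (integrable_expMix hγm hγ hρ ht.le (by linarith) hint)
          (hbound.const_mul _) fun x => expMix_le_linear_add_tail hρ (hγ x) ht.le htlam hΔ hR htR hΛ
    _ = exp (t * ‖Λ‖) * (1 + t * Δ / 4 + t * ∫ x, drift x ∂μ + c * ∫ x, exp (lam * ‖x‖) ∂μ) := by
        rw [integral_const_mul, integral_add hlinear (hint.const_mul c),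
          integral_add (integrable_const _) (hdrift.const_mul t), integral_const,
          integral_const_mul, integral_const_mul]
        simp
    _ ≤ exp (t * ‖Λ‖) * (1 - t * Δ / 2) := by
        refine mul_le_mul_of_nonneg_left ?_ (exp_pos _).le
        nlinarith [mul_le_mul_of_nonneg_left hfeed ht.le,
          mul_le_mul_of_nonneg_left hintC (by positivity : (0 : ℝ) ≤ c)]
    _ = (1 - t * Δ / 2) * exp (t * ‖Λ‖) := mul_comm _ _

end Integration

lemma lintegral_expMix_le_of_negFeedback {d : ℕ} {ρ lam C M Δ t R b : ℝ}
    (hρ : ρ ∈ Icc (0 : ℝ) 1) (hM : 0 < M) (hΔ : 0 < Δ) (ht : 0 < t) (htlam : t ≤ lam / 2)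
    (htΔ : t * Δ ≤ 2) (hR : Δ / 4 ≤ R) (htR : t * R ^ 2 ≤ Δ / 18)
    (htail : 2 * C * exp (-(lam * R) / 2) ≤ t * Δ / 4) (hb : C * exp (t * M + 1) ≤ b)
    {Γ : Measure (Ed d)} [IsProbabilityMeasure Γ]
    (hint : Integrable (fun x => exp (lam * ‖x‖)) Γ) (hintC : ∫ x, exp (lam * ‖x‖) ∂Γ ≤ C)
    {g : Ed d → Ed d → ℝ} (hgm : Measurable (Function.uncurry g))
    (hg : ∀ Λ X, g Λ X ∈ Icc (0 : ℝ) 1) (hNF : NegFeedback d ρ M Δ Γ g)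
    {Λ : Ed d} (hΛ : Λ ∈ suppSpan d Γ) :
    ∫⁻ x, ENNReal.ofReal (expMix ρ t (g Λ x) Λ x) ∂Γ ≤
      ENNReal.ofReal ((1 - t * Δ / 2) * exp (t * ‖Λ‖) + b) := by
  have hgΛ : Measurable (g Λ) := hgm.comp measurable_prodMk_left
  have hmix := integrable_expMix (Λ := Λ) hgΛ (hg Λ) hρ ht.le (by linarith) hint
  rw [← ofReal_integral_eq_lintegral_ofReal hmix (ae_of_all _ fun x => expMix_nonneg (hg Λ x))]
  refine ENNReal.ofReal_le_ofReal ?_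
  have hexp_int : 0 ≤ ∫ x, exp (lam * ‖x‖) ∂Γ := integral_nonneg fun x => (exp_pos _).le
  have hb0 : 0 ≤ b := (mul_nonneg (hexp_int.trans hintC) (exp_pos _).le).trans hb
  have hβ : 0 ≤ (1 - t * Δ / 2) * exp (t * ‖Λ‖) := mul_nonneg (by linarith) (exp_pos _).le
  by_cases hlarge : M ≤ ‖Λ‖ ∧ 4 * R ^ 2 ≤ Δ * ‖Λ‖
  · linarith [integral_expMix_le_of_feedback hgΛ (hg Λ) hρ ht htlam hΔ hR htR htail hlarge.2
      hint hintC (hNF Λ hΛ hlarge.1)]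
  have htΛ : t * ‖Λ‖ ≤ t * M + 1 := by
    rw [not_and_or, not_le, not_le] at hlarge
    rcases hlarge with h | h
    · nlinarith
    · have : t * ‖Λ‖ * Δ < 1 * Δ := by nlinarith
      nlinarith [lt_of_mul_lt_mul_right this hΔ.le]
  calc ∫ x, expMix ρ t (g Λ x) Λ x ∂Γ ≤ ∫ x, exp (t * ‖Λ‖) * exp (lam * ‖x‖) ∂Γ :=
        integral_mono hmix (hint.const_mul _) fun x =>
          (expMix_le_exp_mul_exp hρ (hg Λ x) ht.le).trans (by gcongr; linarith)
    _ = exp (t * ‖Λ‖) * ∫ x, exp (lam * ‖x‖) ∂Γ := integral_const_mul _ _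
    _ ≤ exp (t * M + 1) * C := mul_le_mul (exp_le_exp.2 htΛ) hintC hexp_int (exp_pos _).le
    _ ≤ (1 - t * Δ / 2) * exp (t * ‖Λ‖) + b := by linarith

lemma exists_tail_radius {lam C Δ : ℝ} (hlam : 0 < lam) (hC : 0 < C) (hΔ : 0 < Δ) :
    ∃ t₀ > 0, ∀ t ∈ Ioc 0 t₀, ∃ R, Δ / 4 ≤ R ∧ t * R ^ 2 ≤ Δ / 18 ∧
      2 * C * exp (-(lam * R) / 2) ≤ t * Δ / 4 := by
  set K := 8 * C / Δ
  have hK : 0 < K := by positivity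
  refine ⟨min (K * exp (-(lam * Δ / 8))) ((lam ^ 2 * Δ / 1152) ^ 2 / K), by positivity, ?_⟩
  rintro t ⟨ht, ht₀⟩
  have hKt : 0 < K / t := by positivity
  have hlog : lam * Δ / 8 ≤ log (K / t) := by
    rw [le_log_iff_exp_le hKt, le_div_iff₀ ht]
    calc exp (lam * Δ / 8) * t ≤ exp (lam * Δ / 8) * (K * exp (-(lam * Δ / 8))) := by
          gcongr; exact ht₀.trans (min_le_left _ _)
      _ = K := by rw [mul_left_comm, ← exp_add]; simp
  -- `R` is chosen so that the tail bound `2 C exp (-λR/2) ≤ tΔ/4` is an equality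
  refine ⟨2 / lam * log (K / t), ?_, ?_, ?_⟩
  · calc Δ / 4 = 2 / lam * (lam * Δ / 8) := by field_simp; ring
      _ ≤ 2 / lam * log (K / t) := by gcongr
  · have hsq := sq_log_le_sqrt ((log_nonneg_iff hKt).mp (le_trans (by positivity) hlog))
    have htK : t * K ≤ (lam ^ 2 * Δ / 1152) ^ 2 :=
      (le_div_iff₀ hK).mp (ht₀.trans (min_le_right _ _))
    have hsqrt : t * √(K / t) ≤ lam ^ 2 * Δ / 1152 := by
      have : t * √(K / t) = √(t * K) := by
        rw [show t * K = t ^ 2 * (K / t) by field_simp, sqrt_mul (sq_nonneg t), sqrt_sq ht.le]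
      rw [this]
      exact sqrt_le_iff.mpr ⟨by positivity, htK⟩
    calc t * (2 / lam * log (K / t)) ^ 2 = 4 / lam ^ 2 * (t * log (K / t) ^ 2) := by ring
      _ ≤ 4 / lam ^ 2 * (16 * (t * √(K / t))) := by
          refine mul_le_mul_of_nonneg_left ?_ (by positivity)
          linarith [mul_le_mul_of_nonneg_left hsq ht.le]
      _ ≤ 4 / lam ^ 2 * (16 * (lam ^ 2 * Δ / 1152)) := by gcongr
      _ = Δ / 18 := by field_simp; ring
  · rw [show -(lam * (2 / lam * log (K / t))) / 2 = -log (K / t) by field_simp, exp_neg,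
      exp_log hKt]
    apply le_of_eq
    simp only [K]
    field_simp
    ring

lemma exists_uniform_drift {ρ lam C M Δ : ℝ} (hρ : ρ ∈ Icc (0 : ℝ) 1) (hlam : 0 < lam)
    (hC : 0 < C) (hM : 0 < M) (hΔ : 0 < Δ) :
    ∃ lam₁ > 0, lam₁ * Δ ≤ 1 ∧ ∀ t ∈ Ioc 0 lam₁, ∀ (d : ℕ) (Γ : Measure (Ed d)),
      IsProbabilityMeasure Γ → Integrable (fun x => exp (lam * ‖x‖)) Γ →
      ∫ x, exp (lam * ‖x‖) ∂Γ ≤ C → ∀ g : Ed d → Ed d → ℝ, Measurable (Function.uncurry g) →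
        (∀ Λ X, g Λ X ∈ Icc (0 : ℝ) 1) → NegFeedback d ρ M Δ Γ g → ∀ Λ ∈ suppSpan d Γ,
          ∫⁻ X, ENNReal.ofReal (expMix ρ t (g Λ X) Λ X) ∂Γ ≤
            ENNReal.ofReal ((1 - t * Δ / 2) * exp (t * ‖Λ‖) + C * exp (lam₁ * M + 1)) := by
  obtain ⟨t₀, ht₀, hradius⟩ := exists_tail_radius hlam hC hΔ
  refine ⟨min t₀ (min (lam / 2) (1 / Δ)), lt_min ht₀ (lt_min (by positivity) (by positivity)),
    (le_div_iff₀ hΔ).mp ((min_le_right _ _).trans (min_le_right _ _)), ?_⟩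
  rintro t ⟨ht, htlam₁⟩ d Γ _ hint hintC g hgm hg hNF Λ hΛ
  obtain ⟨R, hR, htR, htail⟩ := hradius t ⟨ht, htlam₁.trans (min_le_left _ _)⟩
  have htΔ : t * Δ ≤ 2 := by
    have := (le_div_iff₀ hΔ).mp (htlam₁.trans ((min_le_right _ _).trans (min_le_right _ _)))
    linarith
  exact lintegral_expMix_le_of_negFeedback hρ hM hΔ ht
    (htlam₁.trans ((min_le_right _ _).trans (min_le_left _ _))) htΔ hR htR htail
    (mul_le_mul_of_nonneg_left (exp_le_exp.2 (by nlinarith)) hC.le) hint hintC hgm hg hNF hΛ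

/-- Drift inequality for the CAR kernel under the negative feedback condition:
there are universal constants `β ∈ (0,1)`, `b > 0`, `λ₁ > 0` depending only on
`M`, `Δ`, `λ` and `C` such that `P_g V ≤ β V + b` on `W_Γ` where `V = exp(λ₁‖·‖)`;
moreover for every `α ∈ (0,1]` one has `P_g V^α ≤ β_α V^α + b` with `β_α ∈ (0,1)`
continuous in `α` and `β_α → 1` as `α → 0`. -/
theorem stmt1 (ρ lam C M Δ : ℝ) (hρ : ρ ∈ Set.Ioo (0 : ℝ) 1)
    (hlam : 0 < lam) (hC : 1 ≤ C) (hM : 0 < M) (hΔ : 0 < Δ) :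
    ∃ β ∈ Set.Ioo (0 : ℝ) 1, ∃ b > (0 : ℝ), ∃ lam₁ > (0 : ℝ),
      (∀ (d : ℕ) (Γ : Measure (Ed d)), IsProbabilityMeasure Γ →
        Integrable (fun x => Real.exp (lam * ‖x‖)) Γ →
        (∫ x, Real.exp (lam * ‖x‖) ∂Γ) ≤ C →
        ∀ g : Ed d → Ed d → ℝ, Measurable (Function.uncurry g) →
          (∀ Λ X, g Λ X ∈ Set.Icc (0 : ℝ) 1) →
          NegFeedback d ρ M Δ Γ g →
          ∀ Λ ∈ suppSpan d Γ,
            (∫⁻ X, ENNReal.ofReal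
                (g Λ X * Real.exp (lam₁ * ‖Λ + (1 - ρ) • X‖) +
                  (1 - g Λ X) * Real.exp (lam₁ * ‖Λ - ρ • X‖)) ∂Γ)
              ≤ ENNReal.ofReal (β * Real.exp (lam₁ * ‖Λ‖) + b)) ∧
      ∃ βα : ℝ → ℝ, ContinuousOn βα (Set.Ioc 0 1) ∧
        Tendsto βα (nhdsWithin 0 (Set.Ioi 0)) (nhds 1) ∧
        ∀ α ∈ Set.Ioc (0 : ℝ) 1, βα α ∈ Set.Ioo (0 : ℝ) 1 ∧
          ∀ (d : ℕ) (Γ : Measure (Ed d)), IsProbabilityMeasure Γ →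
            Integrable (fun x => Real.exp (lam * ‖x‖)) Γ →
            (∫ x, Real.exp (lam * ‖x‖) ∂Γ) ≤ C →
            ∀ g : Ed d → Ed d → ℝ, Measurable (Function.uncurry g) →
              (∀ Λ X, g Λ X ∈ Set.Icc (0 : ℝ) 1) →
              NegFeedback d ρ M Δ Γ g →
              ∀ Λ ∈ suppSpan d Γ,
                (∫⁻ X, ENNReal.ofReal
                    (g Λ X * Real.exp (lam₁ * ‖Λ + (1 - ρ) • X‖) ^ α +
                      (1 - g Λ X) * Real.exp (lam₁ * ‖Λ - ρ • X‖) ^ α) ∂Γ)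
                  ≤ ENNReal.ofReal (βα α * Real.exp (lam₁ * ‖Λ‖) ^ α + b) := by
  obtain ⟨lam₁, hlam₁, hlam₁Δ, drift⟩ :=
    exists_uniform_drift (Ioo_subset_Icc_self hρ) hlam (by linarith : 0 < C) hM hΔ
  have hβ : ∀ α ∈ Ioc (0 : ℝ) 1, 1 - α * lam₁ * Δ / 2 ∈ Ioo (0 : ℝ) 1 := by
    rintro α ⟨hα₀, hα₁⟩
    constructor <;> nlinarith [mul_pos (mul_pos hα₀ hlam₁) hΔ]
  refine ⟨1 - lam₁ * Δ / 2, by simpa using hβ 1 ⟨one_pos, le_rfl⟩, C * exp (lam₁ * M + 1),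
    by positivity, lam₁, hlam₁, drift lam₁ ⟨hlam₁, le_rfl⟩, fun α => 1 - α * lam₁ * Δ / 2,
    by fun_prop, ?_, fun α hα => ⟨hβ α hα, ?_⟩⟩
  · exact ((by fun_prop : Continuous fun α : ℝ => 1 - α * lam₁ * Δ / 2).tendsto' 0 1
      (by simp)).mono_left nhdsWithin_le_nhds
  · intro d Γ hΓ hint hintC g hgm hg hNF Λ hΛ
    have hpow : ∀ v : Ed d, exp (lam₁ * ‖v‖) ^ α = exp (α * lam₁ * ‖v‖) := fun v => by
      rw [← exp_mul]; ring_nf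
    simp only [hpow]
    exact drift (α * lam₁) ⟨mul_pos hα.1 hlam₁, mul_le_of_le_one_left hlam₁.le hα.2⟩
      d Γ hΓ hint hintC g hgm hg hNF Λ hΛ
end
end

section
/- Fix ρ ∈ (0,1). Let Γ and π be Borel probability measures on ℝ^d with ∫ ‖X‖ dΓ(X) < ∞ and ∫ ‖Λ‖ dπ(Λ) < ∞, let g: ℝ^d × ℝ^d → [0,1] be measurable, and suppose π is an invariant probability measure for the kernel P_g. Let C := { x ↦ ∫ g(Λ, x) dμ(Λ) : μ a Borel probability measure on ℝ^d } and define Φ on C by Φ(r) := ∫ (r(X) − ρ)·X dΓ(X). If (A) Φ is injective on C, and (B) the constant function x ↦ ρ belongs to C, then ∫ g(Λ, x) dπ(Λ) = ρ for every x ∈ ℝ^d. -/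
open MeasureTheory ProbabilityTheory Filter Set
open scoped ENNReal RealInnerProductSpace

noncomputable section

/-- `π` is an invariant probability measure for the kernel `P_g`:
`π(A) = ∫ P_g(Λ, A) dπ(Λ)` for every Borel set `A`. -/
def IsInvariantMeasure (d : ℕ) (ρ : ℝ) (Γ : Measure (Ed d)) (g : Ed d → Ed d → ℝ)
    (π : Measure (Ed d)) : Prop :=
  ∀ A : Set (Ed d), MeasurableSet A →
    (π A).toReal = ∫ Λ, kernelOp d ρ Γ g (A.indicator fun _ => (1 : ℝ)) Λ ∂π

/-!
Invariance says that `π` is the sum of the pushforward of `g · (π ⊗ Γ)` under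
`(Λ, X) ↦ Λ + (1 - ρ) X` and of the pushforward of `(1 - g) · (π ⊗ Γ)` under `(Λ, X) ↦ Λ - ρ X`.
Integrating `Λ ↦ Λ` against both sides, the mean of `π` is unchanged by a step, which on average
moves `Λ` by `(g(Λ, X) - ρ) X`; so `∫∫ (g(Λ, X) - ρ) X dπ dΓ = 0`. By Fubini this is
`Φ(r) = 0 = Φ(ρ)` for `r = ∫ g(Λ, ·) dπ(Λ) ∈ C`, and injectivity of `Φ` gives `r = ρ`.
-/

lemma norm_le_one_of_mem_Icc {x : ℝ} (hx : x ∈ Icc (0 : ℝ) 1) : ‖x‖ ≤ 1 :=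
  (Real.norm_of_nonneg hx.1).trans_le hx.2

section WeightedMap

variable {α β : Type*} [MeasurableSpace α] [MeasurableSpace β]

def weightedMap (σ : Measure α) (w : α → ℝ) (T : α → β) : Measure β :=
  (σ.withDensity fun a => ENNReal.ofReal (w a)).map T

variable {σ : Measure α} {w : α → ℝ} {T : α → β}

lemma integral_weightedMap {E : Type*} [NormedAddCommGroup E] [NormedSpace ℝ E]
    (hT : Measurable T) (hw : Measurable w) (hw0 : ∀ a, 0 ≤ w a) {f : β → E}
    (hf : AEStronglyMeasurable f (weightedMap σ w T)) :
    ∫ b, f b ∂weightedMap σ w T = ∫ a, w a • f (T a) ∂σ := by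
  rw [weightedMap, integral_map hT.aemeasurable hf,
    integral_withDensity_eq_integral_toReal_smul hw.ennreal_ofReal
      (ae_of_all _ fun _ => ENNReal.ofReal_lt_top)]
  simp_rw [ENNReal.toReal_ofReal (hw0 _)]

lemma weightedMap_real_apply (hT : Measurable T) (hw : Measurable w) (hw0 : ∀ a, 0 ≤ w a)
    {A : Set β} (hA : MeasurableSet A) :
    (weightedMap σ w T).real A = ∫ a, w a * A.indicator 1 (T a) ∂σ := by
  rw [← integral_indicator_one hA, integral_weightedMap hT hw hw0
    (measurable_one.indicator hA).aestronglyMeasurable]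
  rfl

lemma isFiniteMeasure_weightedMap (hw : HasFiniteIntegral w σ) :
    IsFiniteMeasure (weightedMap σ w T) :=
  have := isFiniteMeasure_withDensity_ofReal hw
  Measure.isFiniteMeasure_map _ T

lemma integrable_mul_indicator_comp [IsFiniteMeasure σ] (hw : Measurable w) (hT : Measurable T)
    (hw1 : ∀ a, w a ∈ Icc (0 : ℝ) 1) {A : Set β} (hA : MeasurableSet A) :
    Integrable (fun a => w a * A.indicator 1 (T a)) σ := by
  refine .of_bound (hw.mul ((measurable_one.indicator hA).comp hT)).aestronglyMeasurable 1
    (ae_of_all _ fun a => ?_)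
  rw [norm_mul]
  exact mul_le_one₀ (norm_le_one_of_mem_Icc (hw1 a)) (norm_nonneg _)
    ((norm_indicator_le_norm_self _ _).trans norm_one.le)

end WeightedMap

section Allocation

variable {α E : Type*} [MeasurableSpace α] [NormedAddCommGroup E] [NormedSpace ℝ E]
  [MeasurableSpace E] {π : Measure α} {Γ : Measure E} {g : α → E → ℝ}

lemma integrable_sub_smul_snd [IsFiniteMeasure π] [SFinite Γ]
    (hg_meas : Measurable (Function.uncurry g)) (hg_range : ∀ a x, g a x ∈ Icc (0 : ℝ) 1)
    (hΓ : Integrable (fun x => x) Γ) (c : ℝ) :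
    Integrable (fun p : α × E => (g p.1 p.2 - c) • p.2) (π.prod Γ) := by
  refine (hΓ.comp_snd π).bdd_smul (1 + ‖c‖) (hg_meas.sub measurable_const).aestronglyMeasurable
    (ae_of_all _ fun p => ?_)
  exact (norm_sub_le _ _).trans (add_le_add_left (norm_le_one_of_mem_Icc (hg_range p.1 p.2)) _)

lemma integral_integral_sub_smul [CompleteSpace E] [IsProbabilityMeasure π] [SFinite Γ]
    (hg_meas : Measurable (Function.uncurry g)) (hg_range : ∀ a x, g a x ∈ Icc (0 : ℝ) 1)
    (hΓ : Integrable (fun x => x) Γ) (c : ℝ) :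
    ∫ x, (∫ a, g a x ∂π - c) • x ∂Γ = ∫ p, (g p.1 p.2 - c) • p.2 ∂(π.prod Γ) := by
  rw [integral_prod_symm _ (integrable_sub_smul_snd hg_meas hg_range hΓ c)]
  congr 1 with x
  have hgx : Integrable (g · x) π :=
    .of_mem_Icc 0 1 (hg_meas.comp measurable_prodMk_right).aemeasurable
      (ae_of_all _ fun a => hg_range a x)
  rw [integral_smul_const, integral_sub hgx (integrable_const c), integral_const, probReal_univ,
    one_smul]

end Allocation

section Invariance

variable {d : ℕ} {ρ : ℝ} {Γ π : Measure (Ed d)} {g : Ed d → Ed d → ℝ}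

def upMove (ρ : ℝ) (p : Ed d × Ed d) : Ed d := p.1 + (1 - ρ) • p.2

def downMove (ρ : ℝ) (p : Ed d × Ed d) : Ed d := p.1 - ρ • p.2

lemma measurable_upMove (ρ : ℝ) : Measurable (upMove (d := d) ρ) := by
  unfold upMove; fun_prop

lemma measurable_downMove (ρ : ℝ) : Measurable (downMove (d := d) ρ) := by
  unfold downMove; fun_prop

lemma IsInvariantMeasure.eq_add_weightedMap [IsFiniteMeasure π] [IsFiniteMeasure Γ]
    (hπinv : IsInvariantMeasure d ρ Γ g π) (hg_meas : Measurable (Function.uncurry g))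
    (hg_range : ∀ Λ X, g Λ X ∈ Icc (0 : ℝ) 1) :
    π = weightedMap (π.prod Γ) (Function.uncurry g) (upMove ρ)
      + weightedMap (π.prod Γ) (fun p => 1 - g p.1 p.2) (downMove ρ) := by
  have hup : ∀ p, Function.uncurry g p ∈ Icc (0 : ℝ) 1 := fun p => hg_range p.1 p.2
  have hdown : ∀ p : Ed d × Ed d, 1 - g p.1 p.2 ∈ Icc (0 : ℝ) 1 := fun p =>
    Icc.one_sub_mem (hup p)
  have hdown_meas : Measurable fun p : Ed d × Ed d => 1 - g p.1 p.2 := hg_meas.const_sub 1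
  have := isFiniteMeasure_weightedMap (T := upMove ρ)
    (Integrable.of_mem_Icc 0 1 hg_meas.aemeasurable (ae_of_all (π.prod Γ) hup)).2
  have := isFiniteMeasure_weightedMap (T := downMove ρ)
    (Integrable.of_mem_Icc 0 1 hdown_meas.aemeasurable (ae_of_all (π.prod Γ) hdown)).2
  ext A hA
  have hup_int := integrable_mul_indicator_comp (σ := π.prod Γ) hg_meas
    (measurable_upMove ρ) hup hA
  have hdown_int := integrable_mul_indicator_comp (σ := π.prod Γ) hdown_meas
    (measurable_downMove ρ) hdown hA
  rw [← measureReal_eq_measureReal_iff, measureReal_add_apply,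
    weightedMap_real_apply (measurable_upMove ρ) hg_meas (fun p => (hup p).1) hA,
    weightedMap_real_apply (measurable_downMove ρ) hdown_meas (fun p => (hdown p).1) hA,
    ← integral_add hup_int hdown_int]
  exact (hπinv A hA).trans (integral_prod _ (hup_int.add hdown_int)).symm

lemma IsInvariantMeasure.integral_eq_integral_prod {F : Type*} [NormedAddCommGroup F]
    [NormedSpace ℝ F] [IsFiniteMeasure π] [IsFiniteMeasure Γ]
    (hπinv : IsInvariantMeasure d ρ Γ g π) (hg_meas : Measurable (Function.uncurry g))
    (hg_range : ∀ Λ X, g Λ X ∈ Icc (0 : ℝ) 1) {f : Ed d → F} (hf : Integrable f π) :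
    ∫ Λ, f Λ ∂π = ∫ p, g p.1 p.2 • f (upMove ρ p) ∂(π.prod Γ)
      + ∫ p, (1 - g p.1 p.2) • f (downMove ρ p) ∂(π.prod Γ) := by
  have hπ := hπinv.eq_add_weightedMap hg_meas hg_range
  rw [hπ] at hf
  obtain ⟨hf_up, hf_down⟩ := integrable_add_measure.1 hf
  conv_lhs => rw [hπ]
  rw [integral_add_measure hf_up hf_down,
    integral_weightedMap (measurable_upMove ρ) hg_meas (fun p => (hg_range p.1 p.2).1) hf_up.1,
    integral_weightedMap (w := fun p : Ed d × Ed d => 1 - g p.1 p.2) (measurable_downMove ρ)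
      (hg_meas.const_sub 1) (fun p => sub_nonneg.2 (hg_range p.1 p.2).2) hf_down.1]
  rfl

lemma IsInvariantMeasure.integral_sub_smul_snd_eq_zero [IsFiniteMeasure π]
    [IsProbabilityMeasure Γ] (hπinv : IsInvariantMeasure d ρ Γ g π)
    (hg_meas : Measurable (Function.uncurry g)) (hg_range : ∀ Λ X, g Λ X ∈ Icc (0 : ℝ) 1)
    (hπ : Integrable (fun Λ => Λ) π) (hΓ : Integrable (fun X => X) Γ) :
    ∫ p, (g p.1 p.2 - ρ) • p.2 ∂(π.prod Γ) = 0 := by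
  have hfst : Integrable (fun p : Ed d × Ed d => p.1) (π.prod Γ) := hπ.comp_fst Γ
  have hsnd : Integrable (fun p : Ed d × Ed d => p.2) (π.prod Γ) := hΓ.comp_snd π
  have hup : Integrable (fun p => g p.1 p.2 • upMove ρ p) (π.prod Γ) :=
    (hfst.add (hsnd.smul (1 - ρ))).bdd_smul 1 hg_meas.aestronglyMeasurable
      (ae_of_all _ fun p => norm_le_one_of_mem_Icc (hg_range p.1 p.2))
  have hdown : Integrable (fun p => (1 - g p.1 p.2) • downMove ρ p) (π.prod Γ) :=
    (hfst.sub (hsnd.smul ρ)).bdd_smul 1 (hg_meas.const_sub 1).aestronglyMeasurable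
      (ae_of_all _ fun p => norm_le_one_of_mem_Icc (Icc.one_sub_mem (hg_range p.1 p.2)))
  have hstep : ∀ p : Ed d × Ed d,
      g p.1 p.2 • upMove ρ p + (1 - g p.1 p.2) • downMove ρ p = p.1 + (g p.1 p.2 - ρ) • p.2 :=
    fun p => by simp only [upMove, downMove]; module
  have hmean := hπinv.integral_eq_integral_prod hg_meas hg_range hπ
  rw [← integral_add hup hdown, funext hstep,
    integral_add hfst (integrable_sub_smul_snd hg_meas hg_range hΓ ρ),
    integral_fun_fst (fun Λ : Ed d => Λ), probReal_univ, one_smul] at hmean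
  exact add_eq_left.1 hmean.symm

end Invariance

theorem stmt8_general (d : ℕ) (ρ : ℝ)
    (Γ : Measure (Ed d)) [IsProbabilityMeasure Γ]
    (hΓmom : Integrable (fun x : Ed d => ‖x‖) Γ)
    (π : Measure (Ed d)) [IsProbabilityMeasure π]
    (hπmom : Integrable (fun Λ : Ed d => ‖Λ‖) π)
    (g : Ed d → Ed d → ℝ) (hg_meas : Measurable (Function.uncurry g))
    (hg_range : ∀ Λ X, g Λ X ∈ Set.Icc (0 : ℝ) 1)
    (hπinv : IsInvariantMeasure d ρ Γ g π)
    (C : Set (Ed d → ℝ))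
    (hC : C = {r : Ed d → ℝ | ∃ μ : Measure (Ed d), IsProbabilityMeasure μ ∧
      ∀ x, r x = ∫ Λ, g Λ x ∂μ})
    (hinj : ∀ r₁ ∈ C, ∀ r₂ ∈ C,
      (∫ X, (r₁ X - ρ) • X ∂Γ) = (∫ X, (r₂ X - ρ) • X ∂Γ) → r₁ = r₂)
    (hconst : (fun _ : Ed d => ρ) ∈ C) :
    ∀ x : Ed d, (∫ Λ, g Λ x ∂π) = ρ := by
  have hΓ : Integrable (fun X : Ed d => X) Γ :=
    (integrable_norm_iff measurable_id.aestronglyMeasurable).1 hΓmom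
  have hπ : Integrable (fun Λ : Ed d => Λ) π :=
    (integrable_norm_iff measurable_id.aestronglyMeasurable).1 hπmom
  have hrC : (fun x => ∫ Λ, g Λ x ∂π) ∈ C := hC ▸ ⟨π, inferInstance, fun _ => rfl⟩
  have hΦ : ∫ X, ((∫ Λ, g Λ X ∂π) - ρ) • X ∂Γ = ∫ X, ((fun _ : Ed d => ρ) X - ρ) • X ∂Γ := by
    rw [integral_integral_sub_smul hg_meas hg_range hΓ ρ,
      hπinv.integral_sub_smul_snd_eq_zero hg_meas hg_range hπ hΓ]
    simp only [sub_self, zero_smul, integral_zero]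
  exact congrFun (hinj _ hrC _ hconst hΦ)

/-- If `Φ(r) = ∫ (r(X) − ρ)·X dΓ(X)` is injective on the convex hull
`C = { x ↦ ∫ g(Λ,x) dμ(Λ) }` of the allocation functions and the constant function `ρ`
belongs to `C`, then the actual targeted allocation ratio under any invariant probability
measure `π` of `P_g` equals `ρ` everywhere. -/
theorem stmt8 (d : ℕ) (ρ : ℝ) (hρ : ρ ∈ Set.Ioo (0 : ℝ) 1)
    (Γ : Measure (Ed d)) [IsProbabilityMeasure Γ]
    (hΓmom : Integrable (fun x : Ed d => ‖x‖) Γ)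
    (π : Measure (Ed d)) [IsProbabilityMeasure π]
    (hπmom : Integrable (fun Λ : Ed d => ‖Λ‖) π)
    (g : Ed d → Ed d → ℝ) (hg_meas : Measurable (Function.uncurry g))
    (hg_range : ∀ Λ X, g Λ X ∈ Set.Icc (0 : ℝ) 1)
    (hπinv : IsInvariantMeasure d ρ Γ g π)
    (C : Set (Ed d → ℝ))
    (hC : C = {r : Ed d → ℝ | ∃ μ : Measure (Ed d), IsProbabilityMeasure μ ∧
      ∀ x, r x = ∫ Λ, g Λ x ∂μ})
    (hinj : ∀ r₁ ∈ C, ∀ r₂ ∈ C,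
      (∫ X, (r₁ X - ρ) • X ∂Γ) = (∫ X, (r₂ X - ρ) • X ∂Γ) → r₁ = r₂)
    (hconst : (fun _ : Ed d => ρ) ∈ C) :
    ∀ x : Ed d, (∫ Λ, g Λ x ∂π) = ρ :=
  stmt8_general d ρ Γ hΓmom π hπmom g hg_meas hg_range hπinv C hC hinj hconst
end
end

section
/- Let Γ be a Borel probability measure on ℝ^d and let W_Γ be the linear span of its topological support. Then there exists a constant c > 0 such that for every Λ ∈ W_Γ one has ∫ |⟨X, Λ⟩| dΓ(X) ≥ c·‖Λ‖. -/
open MeasureTheory ProbabilityTheory Filter Set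
open scoped ENNReal RealInnerProductSpace

noncomputable section

/-!
The function `N Λ = ∫ |⟨X, Λ⟩| dΓ` is positively homogeneous and, by Fatou's lemma, lower
semicontinuous. It vanishes at no nonzero `Λ ∈ W_Γ`: otherwise `⟨X, Λ⟩ = 0` almost surely, so the
closed hyperplane `Λᗮ` contains the support of `Γ`, hence `W_Γ ∋ Λ`, forcing `Λ = 0`. A lower
semicontinuous positive function has a positive minimum on the compact unit sphere of `W_Γ`, and
homogeneity spreads that bound to all of `W_Γ`.
-/

open scoped Topology

theorem lowerSemicontinuous_lintegral {α E : Type*} [MeasurableSpace α] [TopologicalSpace E]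
    [FirstCountableTopology E] {μ : Measure α} {F : E → α → ℝ≥0∞}
    (hF : ∀ x, LowerSemicontinuous fun Λ => F Λ x) (hF_meas : ∀ Λ, AEMeasurable (F Λ) μ) :
    LowerSemicontinuous fun Λ => ∫⁻ x, F Λ x ∂μ :=
  lowerSemicontinuous_iff_le_liminf.mpr fun Λ =>
    calc ∫⁻ x, F Λ x ∂μ ≤ ∫⁻ x, liminf (fun Λ' => F Λ' x) (𝓝 Λ) ∂μ :=
          lintegral_mono fun x => (hF x).le_liminf Λ
      _ ≤ liminf (fun Λ' => ∫⁻ x, F Λ' x ∂μ) (𝓝 Λ) := lintegral_liminf_le' hF_meas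

theorem IsCompact.exists_pos_le_of_lowerSemicontinuousOn {α : Type*} [TopologicalSpace α]
    {K : Set α} (hK : IsCompact K) {f : α → ℝ≥0∞} (hf : LowerSemicontinuousOn f K)
    (hpos : ∀ x ∈ K, 0 < f x) : ∃ m > 0, ∀ x ∈ K, m ≤ f x := by
  rcases K.eq_empty_or_nonempty with rfl | hne
  · exact ⟨1, one_pos, by simp⟩
  · obtain ⟨a, ha, hmin⟩ := hf.exists_isMinOn hne hK
    exact ⟨f a, hpos a ha, fun x hx => hmin hx⟩

section AbsInner

variable {E : Type*} [NormedAddCommGroup E] [InnerProductSpace ℝ E] [MeasurableSpace E]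
  [OpensMeasurableSpace E] (μ : Measure E)

theorem measurable_ofReal_abs_inner (Λ : E) :
    Measurable fun X : E => ENNReal.ofReal |⟪X, Λ⟫| :=
  ENNReal.measurable_ofReal.comp (continuous_id.inner continuous_const).abs.measurable

theorem lowerSemicontinuous_lintegral_abs_inner :
    LowerSemicontinuous fun Λ : E => ∫⁻ X, ENNReal.ofReal |⟪X, Λ⟫| ∂μ :=
  lowerSemicontinuous_lintegral
    (fun _ => (ENNReal.continuous_ofReal.comp
      (continuous_const.inner continuous_id).abs).lowerSemicontinuous)
    (fun Λ => (measurable_ofReal_abs_inner Λ).aemeasurable)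

theorem lintegral_abs_inner_smul (t : ℝ) (Λ : E) :
    ∫⁻ X, ENNReal.ofReal |⟪X, t • Λ⟫| ∂μ
      = ENNReal.ofReal |t| * ∫⁻ X, ENNReal.ofReal |⟪X, Λ⟫| ∂μ := by
  rw [← lintegral_const_mul _ (measurable_ofReal_abs_inner Λ)]
  refine lintegral_congr fun X => ?_
  rw [real_inner_smul_right, abs_mul, ENNReal.ofReal_mul (abs_nonneg t)]

theorem support_subset_orthogonal_of_lintegral_abs_inner_eq_zero {Λ : E}
    (h : ∫⁻ X, ENNReal.ofReal |⟪X, Λ⟫| ∂μ = 0) : μ.support ⊆ (ℝ ∙ Λ)ᗮ := by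
  refine μ.support_subset_of_isClosed (Submodule.isClosed_orthogonal _) ?_
  filter_upwards [(lintegral_eq_zero_iff (measurable_ofReal_abs_inner Λ)).mp h] with X hX
  rw [SetLike.mem_coe, Submodule.mem_orthogonal_singleton_iff_inner_left]
  simpa using hX

theorem lintegral_abs_inner_pos {Λ : E} (hΛ : Λ ∈ Submodule.span ℝ μ.support) (h0 : Λ ≠ 0) :
    0 < ∫⁻ X, ENNReal.ofReal |⟪X, Λ⟫| ∂μ := by
  refine pos_iff_ne_zero.mpr fun h => h0 ?_
  have hΛ_perp : Λ ∈ (ℝ ∙ Λ)ᗮ :=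
    Submodule.span_le.mpr (support_subset_orthogonal_of_lintegral_abs_inner_eq_zero μ h) hΛ
  exact inner_self_eq_zero.mp (Submodule.mem_orthogonal_singleton_iff_inner_left.mp hΛ_perp)

theorem exists_pos_mul_norm_le_lintegral_abs_inner [FiniteDimensional ℝ E] :
    ∃ c > (0 : ℝ), ∀ Λ ∈ Submodule.span ℝ μ.support,
      ENNReal.ofReal (c * ‖Λ‖) ≤ ∫⁻ X, ENNReal.ofReal |⟪X, Λ⟫| ∂μ := by
  set W := Submodule.span ℝ μ.support
  have hK : IsCompact (Metric.sphere (0 : E) 1 ∩ W) :=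
    (isCompact_sphere 0 1).inter_right W.closed_of_finiteDimensional
  obtain ⟨m, hm, hm_le⟩ := hK.exists_pos_le_of_lowerSemicontinuousOn
    ((lowerSemicontinuous_lintegral_abs_inner μ).lowerSemicontinuousOn _)
    fun u hu => lintegral_abs_inner_pos μ hu.2 (ne_zero_of_mem_unit_sphere ⟨u, hu.1⟩)
  obtain ⟨c, -, hc, hcm⟩ := ENNReal.lt_iff_exists_real_btwn.mp hm
  refine ⟨c, ENNReal.ofReal_pos.mp hc, fun Λ hΛ => ?_⟩
  rcases eq_or_ne Λ 0 with rfl | h0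
  · simp
  have hu : ‖Λ‖⁻¹ • Λ ∈ Metric.sphere (0 : E) 1 ∩ W :=
    ⟨mem_sphere_zero_iff_norm.mpr (norm_smul_inv_norm h0), W.smul_mem _ hΛ⟩
  calc ENNReal.ofReal (c * ‖Λ‖)
      = ENNReal.ofReal |‖Λ‖| * ENNReal.ofReal c := by
        rw [abs_norm, ← ENNReal.ofReal_mul (norm_nonneg Λ), mul_comm]
    _ ≤ ENNReal.ofReal |‖Λ‖| * ∫⁻ X, ENNReal.ofReal |⟪X, ‖Λ‖⁻¹ • Λ⟫| ∂μ := by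
        gcongr
        exact hcm.le.trans (hm_le _ hu)
    _ = ∫⁻ X, ENNReal.ofReal |⟪X, Λ⟫| ∂μ := by
        rw [← lintegral_abs_inner_smul, smul_inv_smul₀ (norm_ne_zero_iff.mpr h0)]

end AbsInner

theorem suppSpan_eq_span_support (d : ℕ) (Γ : Measure (Ed d)) :
    suppSpan d Γ = Submodule.span ℝ Γ.support := by
  simp only [suppSpan, Measure.support_eq_forall_isOpen]
  congr! 3 with x
  exact forall_congr' fun U => Imp.swap

theorem stmt11_general (d : ℕ) (Γ : Measure (Ed d)) :
    ∃ c > (0 : ℝ), ∀ Λ ∈ suppSpan d Γ,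
      ENNReal.ofReal (c * ‖Λ‖) ≤ ∫⁻ X, ENNReal.ofReal |⟪X, Λ⟫| ∂Γ := by
  rw [suppSpan_eq_span_support]
  exact exists_pos_mul_norm_le_lintegral_abs_inner Γ

/-- On the linear span of the support of `Γ`, the first absolute moment of `⟨X, Λ⟩` is
bounded below by a constant multiple of `‖Λ‖`. -/
theorem stmt11 (d : ℕ) (Γ : Measure (Ed d)) [IsProbabilityMeasure Γ] :
    ∃ c > (0 : ℝ), ∀ Λ ∈ suppSpan d Γ,
      ENNReal.ofReal (c * ‖Λ‖) ≤ ∫⁻ X, ENNReal.ofReal |⟪X, Λ⟫| ∂Γ :=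
  stmt11_general d Γ
end
end

section
/- Let ξ_1, …, ξ_d ∈ ℝ^d be linearly independent, let A be the d×d matrix whose i-th column is ξ_i/‖ξ_i‖ (so A is invertible), and set ε := 1/(√(d+1)·‖A^{−1}‖₂), where ‖·‖₂ denotes the operator norm with respect to the Euclidean norm. Then for every nonzero Λ ∈ ℝ^d there exists an index i ∈ {1,…,d} such that |⟨Λ, ξ_i⟩| > ε·‖Λ‖·‖ξ_i‖. Equivalently, the open cones R_{ξ_i}^ε = {Λ ≠ 0 : ⟨Λ, ξ_i⟩/(‖Λ‖‖ξ_i‖) > ε} together with their negatives cover ℝ^d \ {0}. -/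
open MeasureTheory ProbabilityTheory Filter Set
open scoped ENNReal RealInnerProductSpace

noncomputable section

/-- The matrix whose `i`-th column is `ξ_i/‖ξ_i‖`. -/
def colMatrix (d : ℕ) (ξ : Fin d → Ed d) : Matrix (Fin d) (Fin d) ℝ :=
  Matrix.of fun k i => (‖ξ i‖)⁻¹ * ξ i k

/-- The operator (spectral) norm of a matrix acting on Euclidean space. -/
def opNorm2 (d : ℕ) (A : Matrix (Fin d) (Fin d) ℝ) : ℝ :=
  ‖LinearMap.toContinuousLinearMap (Matrix.toEuclideanLin A)‖

/-! Let `A` have the unit columns `ξ_i/‖ξ_i‖`, so that `(Aᵀ Λ)_i = ⟪Λ, ξ_i⟫/‖ξ_i‖`. Writing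
`Λ = (A⁻¹)ᵀ (Aᵀ Λ)` and using that transposition preserves the ℓ² operator norm gives
`‖Λ‖ ≤ ‖A⁻¹‖ √d maxᵢ |⟪Λ, ξ_i⟫|/‖ξ_i‖`. If every cosine were at most `ε`, this would force
`‖Λ‖ ≤ √(d/(d+1)) ‖Λ‖`, impossible for `Λ ≠ 0`. -/

open scoped Matrix.Norms.L2Operator Matrix

theorem EuclideanSpace.norm_le_sqrt_card_mul {ι : Type*} [Fintype ι] (y : EuclideanSpace ℝ ι)
    {c : ℝ} (hc : 0 ≤ c) (hy : ∀ i, |y i| ≤ c) : ‖y‖ ≤ √(Fintype.card ι) * c := by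
  refine ((EuclideanSpace.basisFun ι ℝ).norm_le_card_mul_iSup_norm_inner y).trans ?_
  gcongr
  refine Real.iSup_le (fun i => ?_) hc
  simpa using hy i

theorem Matrix.norm_le_l2_opNorm_inv_mul_transpose_mulVec {ι : Type*} [Fintype ι] [DecidableEq ι]
    {A : Matrix ι ι ℝ} (hA : IsUnit A) (x : EuclideanSpace ℝ ι) :
    ‖x‖ ≤ ‖A⁻¹‖ * ‖(EuclideanSpace.equiv ι ℝ).symm (Aᵀ *ᵥ x)‖ := by
  set y := (EuclideanSpace.equiv ι ℝ).symm (Aᵀ *ᵥ x)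
  have hx : x = (EuclideanSpace.equiv ι ℝ).symm ((A⁻¹)ᵀ *ᵥ y) := by
    rw [show y.ofLp = Aᵀ *ᵥ x.ofLp from rfl, Matrix.mulVec_mulVec, ← Matrix.transpose_mul,
      Matrix.mul_nonsing_inv A ((Matrix.isUnit_iff_isUnit_det A).mp hA), Matrix.transpose_one,
      Matrix.one_mulVec]
    exact ((EuclideanSpace.equiv ι ℝ).symm_apply_apply x).symm
  calc ‖x‖ ≤ ‖(A⁻¹)ᵀ‖ * ‖y‖ := hx ▸ Matrix.l2_opNorm_mulVec (A⁻¹)ᵀ y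
    _ = ‖A⁻¹‖ * ‖y‖ := by
        rw [← Matrix.conjTranspose_eq_transpose_of_trivial, Matrix.l2_opNorm_conjTranspose]

theorem opNorm2_eq_l2_opNorm (d : ℕ) (A : Matrix (Fin d) (Fin d) ℝ) : opNorm2 d A = ‖A‖ := rfl

theorem colMatrix_transpose_mulVec (d : ℕ) (ξ : Fin d → Ed d) (Λ : Ed d) (i : Fin d) :
    ((colMatrix d ξ)ᵀ *ᵥ Λ) i = ‖ξ i‖⁻¹ * ⟪Λ, ξ i⟫ := by
  simp only [colMatrix, Matrix.mulVec, dotProduct, Matrix.transpose_apply, Matrix.of_apply,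
    PiLp.inner_apply, RCLike.inner_apply, conj_trivial, Finset.mul_sum]
  exact Finset.sum_congr rfl fun k _ => by ring

theorem abs_colMatrix_transpose_mulVec_le {d : ℕ} {ξ : Fin d → Ed d} {Λ : Ed d} {c : ℝ}
    (hc : 0 ≤ c) (i : Fin d) (h : |⟪Λ, ξ i⟫| ≤ c * ‖ξ i‖) :
    |((colMatrix d ξ)ᵀ *ᵥ Λ) i| ≤ c := by
  rw [colMatrix_transpose_mulVec, abs_mul, abs_inv, abs_norm]
  rcases (norm_nonneg (ξ i)).eq_or_lt with hξ | hξ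
  · simpa [← hξ] using hc
  · rwa [inv_mul_le_iff₀ hξ, mul_comm]

theorem isUnit_colMatrix {d : ℕ} {ξ : Fin d → Ed d} (hli : LinearIndependent ℝ ξ) :
    IsUnit (colMatrix d ξ) := by
  rw [← Matrix.linearIndependent_cols_iff_isUnit]
  let s : Fin d → ℝˣ := fun i => Units.mk0 ‖ξ i‖⁻¹ (by simpa using hli.ne_zero i)
  have hcol : (colMatrix d ξ).col = (EuclideanSpace.equiv (Fin d) ℝ).toLinearMap ∘ (s • ξ) := by
    ext i k
    simp [s, colMatrix, Matrix.col]
  rw [hcol]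
  exact (hli.units_smul s).map' _ (LinearEquiv.ker _)

theorem mul_sqrt_mul_one_div_sqrt_succ_mul_lt_one (n : ℕ) {t : ℝ} (ht : 0 ≤ t) :
    t * √n * (1 / (√(n + 1) * t)) < 1 := by
  rcases ht.eq_or_lt with h | h
  · simp [← h]
  · calc t * √n * (1 / (√(n + 1) * t)) = √n / √(n + 1) := by field_simp
      _ < 1 := (div_lt_one (by positivity)).2 <|
          Real.sqrt_lt_sqrt (Nat.cast_nonneg n) (lt_add_one _)

/-- Cone covering: with `ε = 1/(√(d+1)·‖A⁻¹‖₂)`, for every nonzero `Λ` some `ξ_i` makes an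
angle with `Λ` (or `−Λ`) of cosine greater than `ε`. -/
theorem stmt14 (d : ℕ) (ξ : Fin d → Ed d) (hli : LinearIndependent ℝ ξ) :
    ∀ Λ : Ed d, Λ ≠ 0 → ∃ i : Fin d,
      1 / (Real.sqrt (d + 1) * opNorm2 d (colMatrix d ξ)⁻¹) * ‖Λ‖ * ‖ξ i‖
        < |⟪Λ, ξ i⟫| := by
  intro Λ hΛ
  rw [opNorm2_eq_l2_opNorm]
  set A := colMatrix d ξ
  set ε := 1 / (√(d + 1) * ‖A⁻¹‖)
  by_contra! hcone
  have hcoord (i : Fin d) : |(EuclideanSpace.equiv (Fin d) ℝ).symm (Aᵀ *ᵥ Λ) i| ≤ ε * ‖Λ‖ :=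
    abs_colMatrix_transpose_mulVec_le (by positivity) i (hcone i)
  have hΛ_le : ‖Λ‖ ≤ ‖A⁻¹‖ * √d * ε * ‖Λ‖ := by
    have hy := EuclideanSpace.norm_le_sqrt_card_mul _ (by positivity) hcoord
    rw [Fintype.card_fin] at hy
    calc ‖Λ‖ ≤ ‖A⁻¹‖ * ‖(EuclideanSpace.equiv (Fin d) ℝ).symm (Aᵀ *ᵥ Λ)‖ :=
          Matrix.norm_le_l2_opNorm_inv_mul_transpose_mulVec (isUnit_colMatrix hli) Λ
      _ ≤ ‖A⁻¹‖ * (√d * (ε * ‖Λ‖)) := by gcongr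
      _ = ‖A⁻¹‖ * √d * ε * ‖Λ‖ := by ring
  have hfactor : ‖A⁻¹‖ * √d * ε < 1 := mul_sqrt_mul_one_div_sqrt_succ_mul_lt_one d (norm_nonneg _)
  nlinarith [norm_pos_iff.2 hΛ]
end
end

section
/- Fix ρ ∈ (0,1), ι ∈ (0,1/2), λ₁ > 0, β ∈ (0,1), b > 0, and let V(Λ) = exp(λ₁‖Λ‖). Let Γ be a Borel probability measure on ℝ^d, let S be a set of parameters, and let (g_θ)_{θ∈S} be a family of measurable allocation functions with values in [ι, 1−ι] such that: (i) |g_θ(Λ,X) − g_{θ'}(Λ,X)| ≤ L_g·‖θ − θ'‖ for all θ, θ' ∈ S and all Λ, X ∈ ℝ^d; and (ii) (P_{g_θ} V)(Λ) ≤ β·V(Λ) + b for every θ ∈ S and Λ ∈ ℝ^d. Then, setting L_P := L_g·(β + b)/ι, for all θ, θ' ∈ S, every Λ ∈ ℝ^d, and every measurable h: ℝ^d → ℝ with |h(x)| ≤ V(x) for all x, one has |(P_{g_θ} h)(Λ) − (P_{g_{θ'}} h)(Λ)| ≤ L_P·‖θ − θ'‖·V(Λ); in particular the V-norm distance ‖P_{g_θ}(Λ,·)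 − P_{g_{θ'}}(Λ,·)‖_V ≤ L_P·‖θ − θ'‖·V(Λ). -/
open MeasureTheory ProbabilityTheory Filter Set
open scoped ENNReal RealInnerProductSpace

noncomputable section

/-!
Since `P_g h (Λ)` is affine in `g`, the difference `P_{g_θ} h - P_{g_θ'} h` at `Λ` is the integral
of `(g_θ - g_θ') · (h(Λ + (1-ρ)X) - h(Λ - ρX))`, which is bounded by
`L_g ‖θ - θ'‖ · (V(Λ + (1-ρ)X) + V(Λ - ρX))`. Because `g_θ ∈ [ι, 1-ι]`, the drift integrand
dominates `ι · (V(Λ + (1-ρ)X) + V(Λ - ρX))`, so the drift inequality makes this envelope integrable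
with integral at most `(βV(Λ) + b)/ι ≤ (β + b)V(Λ)/ι`, using `V ≥ 1`.
-/

lemma mul_add_le_mul_add_one_sub_mul {ι p a c : ℝ} (hιp : ι ≤ p) (hp : p ≤ 1 - ι)
    (ha : 0 ≤ a) (hc : 0 ≤ c) : ι * (a + c) ≤ p * a + (1 - p) * c := by
  nlinarith [mul_le_mul_of_nonneg_right hιp ha,
    mul_le_mul_of_nonneg_right (by linarith : ι ≤ 1 - p) hc]

lemma abs_mul_add_one_sub_mul_le {p x y a c : ℝ} (hp₀ : 0 ≤ p) (hp₁ : p ≤ 1)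
    (hx : |x| ≤ a) (hy : |y| ≤ c) : |p * x + (1 - p) * y| ≤ a + c := by
  have hp' : 0 ≤ 1 - p := by linarith
  calc |p * x + (1 - p) * y| ≤ p * |x| + (1 - p) * |y| := by
        simpa only [abs_mul, abs_of_nonneg hp₀, abs_of_nonneg hp'] using
          abs_add_le (p * x) ((1 - p) * y)
    _ ≤ a + c := by nlinarith [abs_nonneg x, abs_nonneg y]

lemma integrable_and_integral_le_of_lintegral_ofReal_le {α : Type*} [MeasurableSpace α]
    {μ : Measure α} {f : α → ℝ} {C : ℝ} (hf : AEStronglyMeasurable f μ) (hf₀ : 0 ≤ᵐ[μ] f)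
    (hC : 0 ≤ C) (hfC : ∫⁻ x, ENNReal.ofReal (f x) ∂μ ≤ ENNReal.ofReal C) :
    Integrable f μ ∧ ∫ x, f x ∂μ ≤ C := by
  have hint : Integrable f μ :=
    ⟨hf, (hasFiniteIntegral_iff_ofReal hf₀).2 (hfC.trans_lt ENNReal.ofReal_lt_top)⟩
  refine ⟨hint, (ENNReal.ofReal_le_ofReal_iff hC).1 ?_⟩
  rwa [ofReal_integral_eq_lintegral_ofReal hint hf₀]

section Kernel

variable {d : ℕ} {ρ ι C δ : ℝ} {Γ : Measure (Ed d)} {Λ : Ed d}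
  {g g' : Ed d → Ed d → ℝ} {h V : Ed d → ℝ}

lemma integrable_and_integral_envelope_le_of_drift (hι : 0 < ι)
    (hg_range : ∀ X, g Λ X ∈ Set.Icc ι (1 - ι))
    (hV : Measurable V) (hV₀ : ∀ x, 0 ≤ V x) (hC : 0 ≤ C)
    (hdrift : ∫⁻ X, ENNReal.ofReal
        (g Λ X * V (Λ + (1 - ρ) • X) + (1 - g Λ X) * V (Λ - ρ • X)) ∂Γ ≤ ENNReal.ofReal C) :
    Integrable (fun X => V (Λ + (1 - ρ) • X) + V (Λ - ρ • X)) Γ ∧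
      ∫ X, (V (Λ + (1 - ρ) • X) + V (Λ - ρ • X)) ∂Γ ≤ C / ι := by
  have hmeas : Measurable fun X : Ed d => V (Λ + (1 - ρ) • X) + V (Λ - ρ • X) := by fun_prop
  have hlower : ∫⁻ X, ENNReal.ofReal (ι * (V (Λ + (1 - ρ) • X) + V (Λ - ρ • X))) ∂Γ
      ≤ ENNReal.ofReal C :=
    (lintegral_mono fun X => ENNReal.ofReal_le_ofReal <|
      mul_add_le_mul_add_one_sub_mul (hg_range X).1 (hg_range X).2 (hV₀ _) (hV₀ _)).trans hdrift
  obtain ⟨hint, hle⟩ := integrable_and_integral_le_of_lintegral_ofReal_le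
    (hmeas.const_mul ι).aestronglyMeasurable
    (Filter.Eventually.of_forall fun _ => mul_nonneg hι.le (add_nonneg (hV₀ _) (hV₀ _)))
    hC hlower
  refine ⟨by simpa [hι.ne'] using hint.const_mul ι⁻¹, ?_⟩
  rw [integral_const_mul] at hle
  rwa [le_div_iff₀ hι, mul_comm]

lemma integrable_kernel_integrand (hg : Measurable (Function.uncurry g))
    (hg_range : ∀ X, g Λ X ∈ Set.Icc 0 1) (hh : Measurable h) (hhV : ∀ x, |h x| ≤ V x)
    (hV : Integrable (fun X => V (Λ + (1 - ρ) • X) + V (Λ - ρ • X)) Γ) :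
    Integrable (fun X => g Λ X * h (Λ + (1 - ρ) • X) + (1 - g Λ X) * h (Λ - ρ • X)) Γ := by
  have hgΛ : Measurable (g Λ) := hg.of_uncurry_left
  refine hV.mono' (by fun_prop) (Filter.Eventually.of_forall fun X => ?_)
  exact abs_mul_add_one_sub_mul_le (hg_range X).1 (hg_range X).2 (hhV _) (hhV _)

lemma kernelOp_sub_kernelOp
    (hint : Integrable (fun X => g Λ X * h (Λ + (1 - ρ) • X) + (1 - g Λ X) * h (Λ - ρ • X)) Γ)
    (hint' : Integrable
      (fun X => g' Λ X * h (Λ + (1 - ρ) • X) + (1 - g' Λ X) * h (Λ - ρ • X)) Γ) :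
    kernelOp d ρ Γ g h Λ - kernelOp d ρ Γ g' h Λ =
      ∫ X, (g Λ X - g' Λ X) * (h (Λ + (1 - ρ) • X) - h (Λ - ρ • X)) ∂Γ := by
  rw [kernelOp, kernelOp, ← integral_sub hint hint']
  congr 1 with X
  ring

lemma abs_kernelOp_sub_kernelOp_le (hg : Measurable (Function.uncurry g))
    (hg' : Measurable (Function.uncurry g')) (hg_range : ∀ X, g Λ X ∈ Set.Icc 0 1)
    (hg'_range : ∀ X, g' Λ X ∈ Set.Icc 0 1) (hgg' : ∀ X, |g Λ X - g' Λ X| ≤ δ)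
    (hh : Measurable h) (hhV : ∀ x, |h x| ≤ V x)
    (hV : Integrable (fun X => V (Λ + (1 - ρ) • X) + V (Λ - ρ • X)) Γ) :
    |kernelOp d ρ Γ g h Λ - kernelOp d ρ Γ g' h Λ|
      ≤ δ * ∫ X, (V (Λ + (1 - ρ) • X) + V (Λ - ρ • X)) ∂Γ := by
  rw [kernelOp_sub_kernelOp (integrable_kernel_integrand hg hg_range hh hhV hV)
    (integrable_kernel_integrand hg' hg'_range hh hhV hV), ← integral_const_mul,
    ← Real.norm_eq_abs]
  refine norm_integral_le_of_norm_le (hV.const_mul δ) (Filter.Eventually.of_forall fun X => ?_)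
  rw [Real.norm_eq_abs, abs_mul]
  have hdiff : |h (Λ + (1 - ρ) • X) - h (Λ - ρ • X)| ≤ V (Λ + (1 - ρ) • X) + V (Λ - ρ • X) :=
    (abs_sub _ _).trans (add_le_add (hhV _) (hhV _))
  exact mul_le_mul (hgg' X) hdiff (abs_nonneg _) ((abs_nonneg _).trans (hgg' X))

end Kernel

theorem stmt19_general
    (d : ℕ) (ρ ι lam₁ β b Lg : ℝ)
    (hι : ι ∈ Set.Ioo (0 : ℝ) (1 / 2))
    (hlam₁ : 0 < lam₁) (hβ : β ∈ Set.Ioo (0 : ℝ) 1) (hb : 0 < b)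
    (Γ : Measure (Ed d))
    {Θ : Type} [NormedAddCommGroup Θ] (S : Set Θ)
    (g : Θ → Ed d → Ed d → ℝ)
    (hg_meas : ∀ t, Measurable (Function.uncurry (g t)))
    (hg_range : ∀ t ∈ S, ∀ Λ X, g t Λ X ∈ Set.Icc ι (1 - ι))
    (hLip : ∀ t ∈ S, ∀ t' ∈ S, ∀ (Λ X : Ed d),
      |g t Λ X - g t' Λ X| ≤ Lg * ‖t - t'‖)
    (hdrift : ∀ t ∈ S, ∀ Λ : Ed d,
      (∫⁻ X, ENNReal.ofReal
          (g t Λ X * Real.exp (lam₁ * ‖Λ + (1 - ρ) • X‖) +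
            (1 - g t Λ X) * Real.exp (lam₁ * ‖Λ - ρ • X‖)) ∂Γ)
        ≤ ENNReal.ofReal (β * Real.exp (lam₁ * ‖Λ‖) + b)) :
    ∀ t ∈ S, ∀ t' ∈ S, ∀ Λ : Ed d, ∀ h : Ed d → ℝ, Measurable h →
      (∀ x, |h x| ≤ Real.exp (lam₁ * ‖x‖)) →
      |kernelOp d ρ Γ (g t) h Λ - kernelOp d ρ Γ (g t') h Λ|
        ≤ Lg * (β + b) / ι * ‖t - t'‖ * Real.exp (lam₁ * ‖Λ‖) := by
  intro t ht t' ht' Λ h hh hhV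
  have hV_ge_one : 1 ≤ Real.exp (lam₁ * ‖Λ‖) := Real.one_le_exp (by positivity)
  have hrange01 : ∀ s ∈ S, ∀ X, g s Λ X ∈ Set.Icc 0 1 := fun s hs X =>
    ⟨hι.1.le.trans (hg_range s hs Λ X).1, (hg_range s hs Λ X).2.trans (by linarith [hι.1])⟩
  obtain ⟨hV, hV_le⟩ := integrable_and_integral_envelope_le_of_drift (ρ := ρ)
    (V := fun x => Real.exp (lam₁ * ‖x‖)) hι.1
    (hg_range t ht Λ) (by fun_prop) (fun _ => (Real.exp_pos _).le)
    (add_nonneg (mul_nonneg hβ.1.le (Real.exp_pos _).le) hb.le) (hdrift t ht Λ)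
  have hδ : 0 ≤ Lg * ‖t - t'‖ := (abs_nonneg _).trans (hLip t ht t' ht' Λ 0)
  calc |kernelOp d ρ Γ (g t) h Λ - kernelOp d ρ Γ (g t') h Λ|
      ≤ Lg * ‖t - t'‖ * ((β * Real.exp (lam₁ * ‖Λ‖) + b) / ι) :=
        (abs_kernelOp_sub_kernelOp_le (hg_meas t) (hg_meas t') (hrange01 t ht)
          (hrange01 t' ht') (hLip t ht t' ht' Λ) hh hhV hV).trans
          (mul_le_mul_of_nonneg_left hV_le hδ)
    _ ≤ Lg * ‖t - t'‖ * ((β + b) * Real.exp (lam₁ * ‖Λ‖) / ι) := by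
        gcongr
        · exact hι.1.le
        · nlinarith [hβ.1]
    _ = Lg * (β + b) / ι * ‖t - t'‖ * Real.exp (lam₁ * ‖Λ‖) := by ring

/-- Lipschitz continuity of the CAR kernel in the parameter: if the allocation family is
Lipschitz in `θ` and satisfies the drift inequality `P_{g_θ} V ≤ βV + b` with
`V = exp(λ₁‖·‖)`, then `‖P_{g_θ}(Λ,·) − P_{g_{θ'}}(Λ,·)‖_V ≤ L_P·‖θ−θ'‖·V(Λ)` with
`L_P = L_g·(β+b)/ι`. -/
theorem stmt19
    (d : ℕ) (ρ ι lam₁ β b Lg : ℝ)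
    (hρ : ρ ∈ Set.Ioo (0 : ℝ) 1) (hι : ι ∈ Set.Ioo (0 : ℝ) (1 / 2))
    (hlam₁ : 0 < lam₁) (hβ : β ∈ Set.Ioo (0 : ℝ) 1) (hb : 0 < b) (hLg : 0 < Lg)
    (Γ : Measure (Ed d)) [IsProbabilityMeasure Γ]
    {Θ : Type} [NormedAddCommGroup Θ] (S : Set Θ)
    (g : Θ → Ed d → Ed d → ℝ)
    (hg_meas : ∀ t, Measurable (Function.uncurry (g t)))
    (hg_range : ∀ t ∈ S, ∀ Λ X, g t Λ X ∈ Set.Icc ι (1 - ι))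
    (hLip : ∀ t ∈ S, ∀ t' ∈ S, ∀ (Λ X : Ed d),
      |g t Λ X - g t' Λ X| ≤ Lg * ‖t - t'‖)
    (hdrift : ∀ t ∈ S, ∀ Λ : Ed d,
      (∫⁻ X, ENNReal.ofReal
          (g t Λ X * Real.exp (lam₁ * ‖Λ + (1 - ρ) • X‖) +
            (1 - g t Λ X) * Real.exp (lam₁ * ‖Λ - ρ • X‖)) ∂Γ)
        ≤ ENNReal.ofReal (β * Real.exp (lam₁ * ‖Λ‖) + b)) :
    ∀ t ∈ S, ∀ t' ∈ S, ∀ Λ : Ed d, ∀ h : Ed d → ℝ, Measurable h →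
      (∀ x, |h x| ≤ Real.exp (lam₁ * ‖x‖)) →
      |kernelOp d ρ Γ (g t) h Λ - kernelOp d ρ Γ (g t') h Λ|
        ≤ Lg * (β + b) / ι * ‖t - t'‖ * Real.exp (lam₁ * ‖Λ‖) :=
  stmt19_general d ρ ι lam₁ β b Lg hι hlam₁ hβ hb Γ S g hg_meas hg_range hLip hdrift
end
end
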